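/- An integral domain A is a unique factorization domain if and only if every nonzero prime ideal of A contains a nonzero principal prime ideal. -/

import Mathlib

/-- Kaplansky's criterion: an integral domain `A` is a unique factorization domain if
and only if every nonzero prime ideal of `A` contains a nonzero principal prime ideal
(equivalently, contains a prime element). -/
theorem kaplansky_criterion (A : Type*) [CommRing A] [IsDomain A] :
    UniqueFactorizationMonoid A ↔
      ∀ P : Ideal A, P ≠ ⊥ → P.IsPrime →
        ∃ p : A, p ∈ P ∧ p ≠ 0 ∧ (Ideal.span {p}).IsPrime := by
  have prime_iff (p : A) : Prime p ↔ p ≠ 0 ∧ (Ideal.span {p}).IsPrime :=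
    ⟨fun hp => ⟨hp.ne_zero, (Ideal.span_singleton_prime hp.ne_zero).2 hp⟩,
      fun ⟨hp, hprime⟩ => (Ideal.span_singleton_prime hp).1 hprime⟩
  simp only [UniqueFactorizationMonoid.iff_exists_prime_mem_of_isPrime, prime_iff]
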